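/- arXiv:2006.16770 — 4 statements merged into one kernel-verified Lean document; each statement's English description precedes it below -/
import Mathlib

section
/- Suppose u ∈ C¹[0,1] has zero mean (∫₀¹ u = 0) and u ≥ -1 on [0,1], with u not identically 0. If u satisfies the variational inequality ∫₀¹ [ε u'(v-u)' + λ³ Ẇ*((1+u)/λ)(v-u)] ds ≥ 0 for all admissible v, and the resulting Euler–Lagrange relations hold, then λ ≥ 1/M, where M > 1 is defined by Ẇ*(M) = Ẇ*(0) = γ. -/
/-!
At a maximum point `s_M` of `u` the Neumann conditions force `u'(s_M) = 0` and hence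
`u''(s_M) ≤ 0`; likewise `u''(s_m) ≥ 0` at a minimum point. The equation
`ε u'' = λ³ Ẇ((1+u)/λ) - μ` then gives `Ẇ(a_M) ≤ Ẇ(a_m)` for `a = (1+u)/λ`. Zero mean and
nontriviality make `u(s_m) < u(s_M)` and `u(s_M) ≥ 0`, so `0 ≤ a_m < a_M`, and since `Ẇ` first
decreases on `[0, κ]` and then strictly increases, returning to the level `Ẇ(0)` at `M`,
this is only possible if `a_M ≤ M`. Thus `1 ≤ 1 + u(s_M) ≤ M λ`.
-/

open Set Filter Topology

theorem HasDerivAt.eventually_nhdsGT_gt {f : ℝ → ℝ} {c x : ℝ} (hf : HasDerivAt f c x)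
    (hc : 0 < c) : ∀ᶠ y in 𝓝[>] x, f x < f y := by
  filter_upwards [(hasDerivAt_iff_tendsto_slope_left_right.1 hf).2.eventually
    (eventually_gt_nhds hc), self_mem_nhdsWithin] with y hy hxy
  exact (slope_pos_iff hxy).1 hy

theorem HasDerivAt.eventually_nhdsLT_lt {f : ℝ → ℝ} {c x : ℝ} (hf : HasDerivAt f c x)
    (hc : 0 < c) : ∀ᶠ y in 𝓝[<] x, f y < f x := by
  filter_upwards [(hasDerivAt_iff_tendsto_slope_left_right.1 hf).1.eventually
    (eventually_gt_nhds hc), self_mem_nhdsWithin] with y hy hyx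
  exact (slope_pos_iff_gt hyx).1 hy

section ExtremumOnIcc

variable {u u' u'' : ℝ → ℝ} {a b s : ℝ}

theorem not_isMaxOn_Icc_left_of_eventually_deriv_pos (hab : a < b)
    (hu : ∀ x ∈ Icc a b, HasDerivAt u (u' x) x) (hpos : ∀ᶠ x in 𝓝[>] a, 0 < u' x) :
    ¬ IsMaxOn u (Icc a b) a := by
  intro hmax
  obtain ⟨r, har, hr⟩ := mem_nhdsGT_iff_exists_Ioo_subset.1 hpos
  set t := min r b
  have hat : a < t := lt_min har hab
  have hsub : Icc a t ⊆ Icc a b := Icc_subset_Icc_right (min_le_right r b)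
  have hmono : StrictMonoOn u (Icc a t) :=
    strictMonoOn_of_hasDerivWithinAt_pos (convex_Icc a t)
      (fun x hx ↦ (hu x (hsub hx)).continuousAt.continuousWithinAt)
      (fun x hx ↦ (hu x (hsub (interior_subset hx))).hasDerivWithinAt)
      (fun x hx ↦ by
        rw [interior_Icc] at hx
        exact hr ⟨hx.1, hx.2.trans_le (min_le_left r b)⟩)
  exact (hmono (left_mem_Icc.2 hat.le) (right_mem_Icc.2 hat.le) hat).not_ge
    (hmax (hsub (right_mem_Icc.2 hat.le)))

theorem not_isMaxOn_Icc_right_of_eventually_deriv_neg (hab : a < b)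
    (hu : ∀ x ∈ Icc a b, HasDerivAt u (u' x) x) (hneg : ∀ᶠ x in 𝓝[<] b, u' x < 0) :
    ¬ IsMaxOn u (Icc a b) b := by
  intro hmax
  obtain ⟨l, hlb, hl⟩ := mem_nhdsLT_iff_exists_Ioo_subset.1 hneg
  set t := max l a
  have htb : t < b := max_lt hlb hab
  have hsub : Icc t b ⊆ Icc a b := Icc_subset_Icc_left (le_max_right l a)
  have hanti : StrictAntiOn u (Icc t b) :=
    strictAntiOn_of_hasDerivWithinAt_neg (convex_Icc t b)
      (fun x hx ↦ (hu x (hsub hx)).continuousAt.continuousWithinAt)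
      (fun x hx ↦ (hu x (hsub (interior_subset hx))).hasDerivWithinAt)
      (fun x hx ↦ by
        rw [interior_Icc] at hx
        exact hl ⟨(le_max_left l a).trans_lt hx.1, hx.2⟩)
  exact (hanti (left_mem_Icc.2 htb.le) (right_mem_Icc.2 htb.le) htb).not_ge
    (hmax (hsub (left_mem_Icc.2 htb.le)))

theorem hasDerivAt_nonpos_of_isMaxOn_Icc {c : ℝ} (hab : a < b) (hs : s ∈ Icc a b)
    (hu : ∀ x ∈ Icc a b, HasDerivAt u (u' x) x) (hu's : u' s = 0) (hc : HasDerivAt u' c s)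
    (hmax : IsMaxOn u (Icc a b) s) : c ≤ 0 := by
  by_contra! hc0
  rcases hs.2.lt_or_eq with hsb | rfl
  · refine not_isMaxOn_Icc_left_of_eventually_deriv_pos hsb
      (fun x hx ↦ hu x ⟨hs.1.trans hx.1, hx.2⟩) ?_ (hmax.on_subset (Icc_subset_Icc_left hs.1))
    simpa only [hu's] using hc.eventually_nhdsGT_gt hc0
  · refine not_isMaxOn_Icc_right_of_eventually_deriv_neg hab hu ?_ hmax
    simpa only [hu's] using hc.eventually_nhdsLT_lt hc0

theorem hasDerivAt_eq_zero_of_isMaxOn_Icc (hs : s ∈ Icc a b) (hu : HasDerivAt u (u' s) s)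
    (ha : u' a = 0) (hb : u' b = 0) (hmax : IsMaxOn u (Icc a b) s) : u' s = 0 := by
  rcases hs.1.eq_or_lt with rfl | has
  · exact ha
  rcases hs.2.lt_or_eq with hsb | rfl
  · exact (hmax.isLocalMax (Icc_mem_nhds has hsb)).hasDerivAt_eq_zero hu
  · exact hb

theorem second_deriv_nonpos_of_isMaxOn_neumann (hab : a < b)
    (hu : ∀ x ∈ Icc a b, HasDerivAt u (u' x) x) (hu' : ∀ x ∈ Icc a b, HasDerivAt u' (u'' x) x)
    (ha : u' a = 0) (hb : u' b = 0) (hs : s ∈ Icc a b) (hmax : IsMaxOn u (Icc a b) s) :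
    u'' s ≤ 0 :=
  hasDerivAt_nonpos_of_isMaxOn_Icc hab hs hu
    (hasDerivAt_eq_zero_of_isMaxOn_Icc hs (hu s hs) ha hb hmax) (hu' s hs) hmax

theorem second_deriv_nonneg_of_isMinOn_neumann (hab : a < b)
    (hu : ∀ x ∈ Icc a b, HasDerivAt u (u' x) x) (hu' : ∀ x ∈ Icc a b, HasDerivAt u' (u'' x) x)
    (ha : u' a = 0) (hb : u' b = 0) (hs : s ∈ Icc a b) (hmin : IsMinOn u (Icc a b) s) :
    0 ≤ u'' s := by
  have := second_deriv_nonpos_of_isMaxOn_neumann (u := fun x ↦ -u x) (u' := fun x ↦ -u' x)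
    (u'' := fun x ↦ -u'' x) hab (fun x hx ↦ (hu x hx).neg) (fun x hx ↦ (hu' x hx).neg)
    (by simp [ha]) (by simp [hb]) hs hmin.neg
  simpa using this

end ExtremumOnIcc

theorem nonneg_of_forall_le_of_integral_eq_zero {u : ℝ → ℝ} {a b m : ℝ} (hab : a < b)
    (hu : IntervalIntegrable u MeasureTheory.volume a b) (h0 : ∫ x in a..b, u x = 0)
    (hm : ∀ x ∈ Icc a b, u x ≤ m) : 0 ≤ m := by
  have := intervalIntegral.integral_mono_on hab.le hu intervalIntegrable_const hm
  rw [h0, intervalIntegral.integral_const, smul_eq_mul] at this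
  exact nonneg_of_mul_nonneg_right this (sub_pos.2 hab)

theorem nonpos_of_forall_ge_of_integral_eq_zero {u : ℝ → ℝ} {a b m : ℝ} (hab : a < b)
    (hu : IntervalIntegrable u MeasureTheory.volume a b) (h0 : ∫ x in a..b, u x = 0)
    (hm : ∀ x ∈ Icc a b, m ≤ u x) : m ≤ 0 := by
  have := nonneg_of_forall_le_of_integral_eq_zero hab hu.neg
    (by simp only [Pi.neg_apply, intervalIntegral.integral_neg, h0, neg_zero]) fun x hx ↦ neg_le_neg (hm x hx)
  linarith

theorem le_of_apply_le_apply_of_lt {W : ℝ → ℝ} {κ M a b : ℝ} (hanti : AntitoneOn W (Icc 0 κ))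
    (hmono : StrictMonoOn W (Ici κ)) (hκM : κ ≤ M) (hWM : W M = W 0) (ha : 0 ≤ a)
    (hab : a < b) (hW : W b ≤ W a) : b ≤ M := by
  by_contra! hMb
  have hWMb : W M < W b := hmono hκM (hκM.trans hMb.le) hMb
  rcases le_or_gt a κ with haκ | hκa
  · have hWa : W a ≤ W 0 := hanti ⟨le_rfl, ha.trans haκ⟩ ⟨ha, haκ⟩ ha
    linarith
  · exact (hmono hκa.le (hκa.trans hab).le hab).not_ge hW

theorem nontrivial_solution_lambda_lower_bound_general
    (DW : ℝ → ℝ) (κ γ M ε lam μ : ℝ)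
    (hanti : StrictAntiOn DW (Set.Icc 0 κ))
    (hmono : StrictMonoOn DW (Set.Ici κ))
    (hγ : DW 0 = γ)
    (hMκ : κ < M) (hMγ : DW M = γ)
    (hε : 0 < ε) (hlam : 0 < lam)
    (u u' u'' : ℝ → ℝ)
    (hu' : ∀ s ∈ Set.Icc (0:ℝ) 1, HasDerivAt u (u' s) s)
    (hu'' : ∀ s ∈ Set.Icc (0:ℝ) 1, HasDerivAt u' (u'' s) s)
    (hmean : (∫ s in (0:ℝ)..1, u s) = 0)
    (hge : ∀ s ∈ Set.Icc (0:ℝ) 1, -1 ≤ u s)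
    (hne : ∃ s ∈ Set.Icc (0:ℝ) 1, u s ≠ 0)
    (hode : ∀ s ∈ Set.Icc (0:ℝ) 1, ε * u'' s = lam^3 * DW ((1 + u s)/lam) - μ)
    (hbc0 : u' 0 = 0) (hbc1 : u' 1 = 0) :
    1/M ≤ lam := by
  have hcont : ContinuousOn u (Icc 0 1) := fun s hs ↦ (hu' s hs).continuousAt.continuousWithinAt
  obtain ⟨sM, hsM, hmax⟩ := isCompact_Icc.exists_isMaxOn (nonempty_Icc.2 zero_le_one) hcont
  obtain ⟨sm, hsm, hmin⟩ := isCompact_Icc.exists_isMinOn (nonempty_Icc.2 zero_le_one) hcont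
  have hint := hcont.intervalIntegrable_of_Icc (μ := MeasureTheory.volume) zero_le_one
  have hM0 : 0 ≤ u sM := nonneg_of_forall_le_of_integral_eq_zero one_pos hint hmean hmax
  have hm0 : u sm ≤ 0 := nonpos_of_forall_ge_of_integral_eq_zero one_pos hint hmean hmin
  have hlt : u sm < u sM := by
    obtain ⟨s, hs, hs0⟩ := hne
    by_contra! h
    have hsM' : u s ≤ u sM := hmax hs
    have hsm' : u sm ≤ u s := hmin hs
    exact hs0 (by linarith)
  have hDW : DW ((1 + u sM) / lam) ≤ DW ((1 + u sm) / lam) := by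
    have h3 : 0 < lam ^ 3 := by positivity
    have huM := second_deriv_nonpos_of_isMaxOn_neumann one_pos hu' hu'' hbc0 hbc1 hsM hmax
    have hum := second_deriv_nonneg_of_isMinOn_neumann one_pos hu' hu'' hbc0 hbc1 hsm hmin
    nlinarith [hode sM hsM, hode sm hsm]
  have hle : (1 + u sM) / lam ≤ M :=
    le_of_apply_le_apply_of_lt hanti.antitoneOn hmono hMκ.le (hMγ.trans hγ.symm)
      (div_nonneg (by linarith [hge sm hsm]) hlam.le) (by gcongr) hDW
  rw [div_le_iff₀ hlam] at hle
  have hMpos : 0 < M := pos_of_mul_pos_left (by linarith) hlam.le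
  rw [div_le_iff₀ hMpos]
  linarith

/-- A nontrivial equilibrium (zero-mean, `u ≥ -1`, satisfying the
Euler–Lagrange ODE `ε u'' = λ³ Ẇ*((1+u)/λ) - μ` with Neumann conditions) forces
`λ ≥ 1/M`, where `M > 1` is defined by `Ẇ*(M) = Ẇ*(0) = γ`. -/
theorem nontrivial_solution_lambda_lower_bound
    (DW : ℝ → ℝ) (κ γ M ε lam μ : ℝ)
    (hκ0 : 0 < κ) (hκ1 : κ < 1)
    (hDWc : ContinuousOn DW (Set.Ici 0))
    (hanti : StrictAntiOn DW (Set.Icc 0 κ))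
    (hmono : StrictMonoOn DW (Set.Ici κ))
    (hγ : DW 0 = γ) (hγpos : 0 < γ)
    (hM1 : 1 < M) (hMκ : κ < M) (hMγ : DW M = γ)
    (hε : 0 < ε) (hlam : 0 < lam)
    (u u' u'' : ℝ → ℝ)
    (hu' : ∀ s ∈ Set.Icc (0:ℝ) 1, HasDerivAt u (u' s) s)
    (hu'' : ∀ s ∈ Set.Icc (0:ℝ) 1, HasDerivAt u' (u'' s) s)
    (hmean : (∫ s in (0:ℝ)..1, u s) = 0)
    (hge : ∀ s ∈ Set.Icc (0:ℝ) 1, -1 ≤ u s)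
    (hne : ∃ s ∈ Set.Icc (0:ℝ) 1, u s ≠ 0)
    (hode : ∀ s ∈ Set.Icc (0:ℝ) 1, ε * u'' s = lam^3 * DW ((1 + u s)/lam) - μ)
    (hbc0 : u' 0 = 0) (hbc1 : u' 1 = 0) :
    1/M ≤ lam :=
  nontrivial_solution_lambda_lower_bound_general DW κ γ M ε lam μ hanti hmono hγ hMκ hMγ hε hlam u
    u' u'' hu' hu'' hmean hge hne hode hbc0 hbc1
end

section
/- Combining: if u is Lipschitz on [0,1] with u ≥ -1, u' has one-sided limits satisfying u'(s⁺) ≤ u'(s⁻) everywhere, and at every point s with u(s) = -1 one has u'(s⁺) ≥ 0 ≥ u'(s⁻), and u is C¹ away from {u = -1}, then u ∈ C¹[0,1]. -/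
/-!
At a point `s` with `u s = -1` the hypotheses force both one-sided limits of `d` to vanish, so
extending `d` by `0` on `{u = -1}` gives a function continuous on `[0, 1]`. It remains to see
that `u` is differentiable with derivative `0` at such an `s`. For `t` with `u t > -1`, let `a` be
the contact point between `s` and `t` closest to `t`; the mean value theorem on `[a, t]`, where
`u > -1`, produces a point `c` strictly between `s` and `t` with `|slope u s t| ≤ |d c|`, and
`d c → 0` as `t → s`.
-/

open Set Filter Topology

theorem exists_mem_Ioo_div_le_deriv {f f' : ℝ → ℝ} {a b m : ℝ} (hab : a < b)
    (hf : ContinuousOn f (Icc a b)) (hf' : ∀ x ∈ Ioo a b, m < f x → HasDerivAt f (f' x) x)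
    (ha : f a ≤ m) (hb : m < f b) :
    ∃ c ∈ Ioo a b, m < f c ∧ (f b - m) / (b - a) ≤ f' c := by
  set A := Icc a b ∩ f ⁻¹' Iic m
  have hA : IsCompact A :=
    isCompact_Icc.of_isClosed_subset (hf.preimage_isClosed_of_isClosed isClosed_Icc isClosed_Iic)
      inter_subset_left
  obtain ⟨a', ⟨⟨haa', ha'b⟩, ha'm : f a' ≤ m⟩, ha'_max⟩ :=
    hA.exists_isGreatest ⟨a, ⟨le_rfl, hab.le⟩, ha⟩
  have ha'_lt : a' < b := ha'b.lt_of_ne (by rintro rfl; exact hb.not_ge ha'm)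
  have hfree : ∀ x ∈ Ioc a' b, m < f x := fun x hx ↦
    lt_of_not_ge fun hxm ↦ hx.1.not_ge (ha'_max ⟨⟨haa'.trans hx.1.le, hx.2⟩, hxm⟩)
  obtain ⟨c, hc, hc_eq⟩ := exists_hasDerivAt_eq_slope f f' ha'_lt
    (hf.mono (Icc_subset_Icc_left haa'))
    fun x hx ↦ hf' x ⟨haa'.trans_lt hx.1, hx.2⟩ (hfree x (Ioo_subset_Ioc_self hx))
  refine ⟨c, ⟨haa'.trans_lt hc.1, hc.2⟩, hfree c (Ioo_subset_Ioc_self hc), ?_⟩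
  rw [hc_eq]
  exact div_le_div₀ (by linarith) (by linarith) (by linarith) (by linarith)

theorem exists_mem_Ioo_deriv_le_div {f f' : ℝ → ℝ} {a b m : ℝ} (hab : a < b)
    (hf : ContinuousOn f (Icc a b)) (hf' : ∀ x ∈ Ioo a b, m < f x → HasDerivAt f (f' x) x)
    (ha : m < f a) (hb : f b ≤ m) :
    ∃ c ∈ Ioo a b, m < f c ∧ f' c ≤ (m - f a) / (b - a) := by
  have hg : ContinuousOn (fun x ↦ f (-x)) (Icc (-b) (-a)) :=
    hf.comp continuousOn_neg fun x hx ↦ ⟨le_neg.mp hx.2, neg_le.mp hx.1⟩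
  obtain ⟨c, hc, hfc, hc_le⟩ := exists_mem_Ioo_div_le_deriv (f' := fun x ↦ f' (-x) * -1)
    (neg_lt_neg hab) hg
    (fun x hx hfx ↦ (hf' (-x) ⟨lt_neg.mp hx.2, neg_lt.mp hx.1⟩ hfx).comp x (hasDerivAt_neg x))
    (by simpa using hb) (by simpa using ha)
  refine ⟨-c, ⟨lt_neg.mp hc.2, neg_lt.mp hc.1⟩, hfc, ?_⟩
  rw [neg_neg, neg_sub_neg] at hc_le
  rw [← neg_sub, neg_div]
  linarith

section Obstacle

variable {f f' : ℝ → ℝ} {I : Set ℝ} {m s t : ℝ}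

theorem exists_abs_slope_le_abs_deriv [I.OrdConnected] (hf : ContinuousOn f I)
    (hf' : ∀ x ∈ I, m < f x → HasDerivWithinAt f (f' x) I x)
    (hs : s ∈ I) (ht : t ∈ I) (hfs : f s = m) (hft : m < f t) :
    ∃ c ∈ {x ∈ I | m < f x}, dist c s < dist t s ∧ |slope f s t| ≤ |f' c| := by
  have hderiv : ∀ a ∈ I, ∀ b ∈ I, ∀ x ∈ Ioo a b, m < f x → HasDerivAt f (f' x) x :=
    fun a ha b hb x hx hfx ↦ (hf' x (I.Icc_subset ha hb (Ioo_subset_Icc_self hx)) hfx).hasDerivAt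
      (mem_of_superset (Ioo_mem_nhds hx.1 hx.2) (Ioo_subset_Icc_self.trans (I.Icc_subset ha hb)))
  rcases lt_or_gt_of_ne (show t ≠ s by rintro rfl; linarith) with hts | hst
  · obtain ⟨c, hc, hfc, hc_le⟩ :=
      exists_mem_Ioo_deriv_le_div hts (hf.mono (I.Icc_subset ht hs)) (hderiv t ht s hs) hft hfs.le
    refine ⟨c, ⟨I.Icc_subset ht hs (Ioo_subset_Icc_self hc), hfc⟩, ?_, ?_⟩
    · rw [dist_comm c, dist_comm t, Real.dist_eq, Real.dist_eq, abs_of_pos, abs_of_pos] <;>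
        linarith [hc.1, hc.2]
    · have hslope : slope f s t = (m - f t) / (s - t) := by
        rw [slope_def_field, hfs, ← neg_div_neg_eq, neg_sub, neg_sub]
      rw [hslope, abs_of_neg (div_neg_of_neg_of_pos (by linarith) (by linarith))]
      exact (neg_le_neg hc_le).trans (neg_le_abs _)
  · obtain ⟨c, hc, hfc, hc_le⟩ :=
      exists_mem_Ioo_div_le_deriv hst (hf.mono (I.Icc_subset hs ht)) (hderiv s hs t ht) hfs.le hft
    refine ⟨c, ⟨I.Icc_subset hs ht (Ioo_subset_Icc_self hc), hfc⟩, ?_, ?_⟩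
    · rw [Real.dist_eq, Real.dist_eq, abs_of_pos, abs_of_pos] <;> linarith [hc.1, hc.2]
    · rw [slope_def_field, hfs, abs_of_pos (div_pos (by linarith) (by linarith))]
      exact hc_le.trans (le_abs_self _)

theorem hasDerivWithinAt_zero_of_tendsto_deriv [I.OrdConnected] (hf : ContinuousOn f I)
    (hge : ∀ x ∈ I, m ≤ f x) (hf' : ∀ x ∈ I, m < f x → HasDerivWithinAt f (f' x) I x)
    (hs : s ∈ I) (hfs : f s = m) (hlim : Tendsto f' (𝓝[{x ∈ I | m < f x}] s) (𝓝 0)) :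
    HasDerivWithinAt f 0 I s := by
  rw [hasDerivWithinAt_iff_tendsto_slope, Metric.tendsto_nhdsWithin_nhds]
  intro ε hε
  obtain ⟨δ, hδ, hsmall⟩ := Metric.tendsto_nhdsWithin_nhds.mp hlim ε hε
  refine ⟨δ, hδ, fun t ⟨ht, _⟩ htδ ↦ ?_⟩
  rw [dist_zero_right, Real.norm_eq_abs]
  rcases (hge t ht).eq_or_lt with hft | hft
  · rwa [slope_def_field, hfs, ← hft, sub_self, zero_div, abs_zero]
  · obtain ⟨c, hc, hcs, hslope⟩ := exists_abs_slope_le_abs_deriv hf hf' hs ht hfs hft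
    have hsmall_c := hsmall hc (hcs.trans htδ)
    rw [dist_zero_right, Real.norm_eq_abs] at hsmall_c
    exact hslope.trans_lt hsmall_c

theorem hasDerivWithinAt_ite_lt_of_tendsto_zero [I.OrdConnected] (hf : ContinuousOn f I)
    (hge : ∀ x ∈ I, m ≤ f x) (hf' : ∀ x ∈ I, m < f x → HasDerivWithinAt f (f' x) I x)
    (hlim : ∀ s ∈ I, f s = m → Tendsto f' (𝓝[{x ∈ I | m < f x}] s) (𝓝 0)) (hs : s ∈ I) :
    HasDerivWithinAt f (if m < f s then f' s else 0) I s := by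
  rcases (hge s hs).lt_or_eq with hfs | hfs
  · simpa [hfs] using hf' s hs hfs
  · simpa [← hfs] using hasDerivWithinAt_zero_of_tendsto_deriv hf hge hf' hs hfs.symm
      (hlim s hs hfs.symm)

theorem continuousOn_ite_lt_of_tendsto_zero (hf : ContinuousOn f I) (hge : ∀ x ∈ I, m ≤ f x)
    (hf'c : ContinuousOn f' {x ∈ I | m < f x})
    (hlim : ∀ s ∈ I, f s = m → Tendsto f' (𝓝[{x ∈ I | m < f x}] s) (𝓝 0)) :
    ContinuousOn (fun x ↦ if m < f x then f' x else 0) I := by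
  intro s hs
  rcases (hge s hs).lt_or_eq with hfs | hfs
  · have hfree : {x ∈ I | m < f x} ∈ 𝓝[I] s :=
      inter_mem self_mem_nhdsWithin (hf s hs (Ioi_mem_nhds hfs))
    refine ((hf'c s ⟨hs, hfs⟩).mono_of_mem_nhdsWithin hfree).congr_of_eventuallyEq ?_ (if_pos hfs)
    filter_upwards [hfree] with x hx using if_pos hx.2
  · rw [ContinuousWithinAt, if_neg hfs.not_lt]
    exact Tendsto.if (by rw [← nhdsWithin_inter']; exact hlim s hs hfs.symm) tendsto_const_nhds

end Obstacle

/-- If `u` is Lipschitz on `[0,1]` with `u ≥ -1`, C¹ with derivative `d`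
on the glued set `{u > -1}`, the one-sided limits of `d` satisfy `d(s⁺) ≤ d(s⁻)`
everywhere, and at broken points (`u(s) = -1`) one has `d(s⁺) ≥ 0 ≥ d(s⁻)`, then
`u ∈ C¹[0,1]`: it has a continuous derivative on all of `[0,1]`. -/
theorem regularity_C1
    (u d : ℝ → ℝ) (K : NNReal)
    (hlip : LipschitzOnWith K u (Set.Icc 0 1))
    (hge : ∀ s ∈ Set.Icc (0:ℝ) 1, -1 ≤ u s)
    (hd : ∀ s ∈ Set.Icc (0:ℝ) 1, -1 < u s →
      HasDerivWithinAt u (d s) (Set.Icc 0 1) s)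
    (hdc : ContinuousOn d {s ∈ Set.Icc (0:ℝ) 1 | -1 < u s})
    (hlim : ∀ s ∈ Set.Icc (0:ℝ) 1, ∃ R L : ℝ,
      Filter.Tendsto d
        (nhdsWithin s ({t ∈ Set.Icc (0:ℝ) 1 | -1 < u t} ∩ Set.Ioi s)) (nhds R) ∧
      Filter.Tendsto d
        (nhdsWithin s ({t ∈ Set.Icc (0:ℝ) 1 | -1 < u t} ∩ Set.Iio s)) (nhds L) ∧
      R ≤ L ∧ (u s = -1 → 0 ≤ R ∧ L ≤ 0)) :
    ∃ dd : ℝ → ℝ, ContinuousOn dd (Set.Icc 0 1) ∧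
      ∀ s ∈ Set.Icc (0:ℝ) 1, HasDerivWithinAt u (dd s) (Set.Icc 0 1) s := by
  have hcontact : ∀ s ∈ Icc (0:ℝ) 1, u s = -1 →
      Tendsto d (𝓝[{t ∈ Icc (0:ℝ) 1 | -1 < u t}] s) (𝓝 0) := by
    intro s hs hus
    obtain ⟨R, L, hR, hL, hRL, hsign⟩ := hlim s hs
    obtain ⟨hR0, hL0⟩ := hsign hus
    obtain rfl : R = 0 := by linarith
    obtain rfl : L = 0 := by linarith
    have hs_notMem : s ∉ {t ∈ Icc (0:ℝ) 1 | -1 < u t} := fun h ↦ h.2.ne' hus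
    rw [← sdiff_singleton_eq_self hs_notMem, ← nhdsWithinLT_sup_nhdsWithinGT]
    exact hL.sup hR
  exact ⟨_, continuousOn_ite_lt_of_tendsto_zero hlip.continuousOn hge hdc hcontact,
    fun s hs ↦ hasDerivWithinAt_ite_lt_of_tendsto_zero hlip.continuousOn hge hd hcontact hs⟩
end

section
/- For the trivial solution u ≡ 0 and any λ ∈ (0, λ₁), the second variation δ²V_ε[λ,0;η] = ∫₀¹ [ε(η')² + λ² Ẅ*(1/λ) η²] ds is nonnegative for all η ∈ H¹(0,1) with ∫₀¹ η = 0; specifically δ²V_ε[λ,0;η] ≥ [επ² + λ²Ẅ*(1/λ)] ∫₀¹ η² ds, using the sharp Poincaré inequality ∫₀¹(η')² ≥ π² ∫₀¹ η² for zero-mean η ∈ H¹(0,1). -/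
/-!
Writing `ζ` for the primitive of `η` vanishing at `0`, the zero mean gives `ζ(1) = 0`, and an
integration by parts gives `∫ η² = -∫ ζ η'`. Young's inequality then yields
`2π² ∫ η² ≤ π⁴ ∫ ζ² + ∫ η'²`, while the Dirichlet inequality `π² ∫ ζ² ≤ ∫ ζ'² = ∫ η²` holds for
`ζ`; together they give `π² ∫ η² ≤ ∫ η'²`. The Dirichlet inequality `k² ∫ g² ≤ ∫ g'²` on
`[0, π/k]` follows on the left half from a Picone argument with the weight `k cot(k s)`, which
vanishes at the midpoint, and on the right half by reflection.
-/

open Real MeasureTheory Set Filter Topology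

lemma sin_mul_pos_of_mem_Ioo {k s : ℝ} (hk : 0 < k) (hs : s ∈ Ioo 0 (π / k)) :
    0 < sin (k * s) :=
  sin_pos_of_pos_of_lt_pi (mul_pos hk hs.1) (by rw [← lt_div_iff₀' hk]; exact hs.2)

lemma tendsto_inv_mul_nhdsNE_zero {f : ℝ → ℝ} {f' : ℝ} (hf : HasDerivAt f f' 0) (h0 : f 0 = 0) :
    Tendsto (fun t => t⁻¹ * f t) (𝓝[≠] 0) (𝓝 f') := by
  simpa [h0] using hasDerivAt_iff_tendsto_slope_zero.mp hf

lemma exists_hasDerivAt_primitive {f : ℝ → ℝ} {a b : ℝ} (hab : a ≤ b)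
    (hf : ContinuousOn f (Icc a b)) :
    ∃ F : ℝ → ℝ, F a = 0 ∧ F b = ∫ x in a..b, f x ∧ ∀ x ∈ Icc a b, HasDerivAt F (f x) x := by
  set f₀ := IccExtend hab ((Icc a b).domRestrict f)
  have hf₀ : Continuous f₀ := (continuousOn_iff_continuous_domRestrict.mp hf).Icc_extend'
  have hf₀f : EqOn f₀ f (Icc a b) := fun x hx => IccExtend_of_mem hab _ hx
  refine ⟨fun u => ∫ x in a..u, f₀ x, intervalIntegral.integral_same, ?_, fun x hx => ?_⟩
  · exact intervalIntegral.integral_congr (by rwa [uIcc_of_le hab])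
  · simpa only [hf₀f hx] using (hf₀.integral_hasStrictDerivAt a x).hasDerivAt

noncomputable def picone (k : ℝ) (g : ℝ → ℝ) (x : ℝ) : ℝ :=
  k * cos (k * x) / sin (k * x) * g x ^ 2

/-- `w = k cot(k x)` solves the Riccati equation `w' + w² + k² = 0`, so
`(w g²)' = g'² - k² g² - (g' - w g)²`. -/
lemma hasDerivAt_picone {k g' s : ℝ} {g : ℝ → ℝ} (hg : HasDerivAt g g' s)
    (hs : sin (k * s) ≠ 0) :
    HasDerivAt (picone k g)
      (g' ^ 2 - k ^ 2 * g s ^ 2 - (g' - k * cos (k * s) / sin (k * s) * g s) ^ 2) s := by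
  have hlin : HasDerivAt (fun x => k * x) k s := by simpa using (hasDerivAt_id s).const_mul k
  have hcos := ((hasDerivAt_cos (k * s)).comp s hlin).const_mul k
  have hsin := (hasDerivAt_sin (k * s)).comp s hlin
  refine ((hcos.div hsin hs).mul (hg.pow 2)).congr_deriv ?_
  simp only [Function.comp_apply, Pi.div_apply, Pi.pow_apply]
  field_simp
  norm_num
  ring

lemma tendsto_picone_nhdsGT_zero {k g' : ℝ} {g : ℝ → ℝ} (hk : k ≠ 0) (hg : HasDerivAt g g' 0)
    (h0 : g 0 = 0) : Tendsto (picone k g) (𝓝[>] 0) (𝓝 0) := by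
  have hsin : HasDerivAt (fun t => sin (k * t)) k 0 := by
    simpa [Function.comp_def] using (hasDerivAt_sin (k * 0)).comp 0 ((hasDerivAt_id 0).const_mul k)
  have hcos : Tendsto (fun t => k * cos (k * t)) (𝓝[≠] 0) (𝓝 k) :=
    ((by fun_prop : Continuous fun t => k * cos (k * t)).tendsto' 0 k (by simp)).mono_left
      nhdsWithin_le_nhds
  -- `picone k g t = k cos(k t) (g t / t)² t / (sin(k t) / t)`
  have hlim := (((hcos.mul ((tendsto_inv_mul_nhdsNE_zero hg h0).pow 2)).mul
    (tendsto_id.mono_left nhdsWithin_le_nhds)).div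
    (tendsto_inv_mul_nhdsNE_zero hsin (by simp)) hk).mono_left (nhdsGT_le_nhdsNE 0)
  rw [mul_zero, zero_div] at hlim
  refine hlim.congr' (eventually_nhdsWithin_of_forall fun t (ht : 0 < t) => ?_)
  simp only [picone, Pi.div_apply, id]
  field_simp

lemma neg_picone_le_integral {k δ : ℝ} {g g' : ℝ → ℝ} (hk : 0 < k) (hδ0 : 0 < δ)
    (hδ : δ ≤ π / (2 * k)) (hg : ∀ s ∈ Icc δ (π / (2 * k)), HasDerivAt g (g' s) s)
    (hg' : ContinuousOn g' (Icc δ (π / (2 * k)))) :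
    -picone k g δ ≤ ∫ s in δ..(π / (2 * k)), (g' s ^ 2 - k ^ 2 * g s ^ 2) := by
  have hsub : Icc δ (π / (2 * k)) ⊆ Ioo 0 (π / k) := fun s hs =>
    ⟨hδ0.trans_le hs.1, hs.2.trans_lt (div_lt_div_of_pos_left pi_pos hk (by linarith))⟩
  have hP : ∀ s ∈ Icc δ (π / (2 * k)), HasDerivAt (picone k g) _ s := fun s hs =>
    hasDerivAt_picone (hg s hs) (sin_mul_pos_of_mem_Ioo hk (hsub hs)).ne'
  have hmain := intervalIntegral.sub_le_integral_of_hasDeriv_right_of_le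
    (φ := fun s => g' s ^ 2 - k ^ 2 * g s ^ 2) hδ (HasDerivAt.continuousOn hP)
    (fun s hs => (hP s (Ioo_subset_Icc_self hs)).hasDerivWithinAt)
    ((hg'.pow 2).sub (continuousOn_const.mul
      ((HasDerivAt.continuousOn hg).pow 2))).integrableOn_Icc
    (fun s _ => sub_le_self _ (sq_nonneg _))
  have hP_end : picone k g (π / (2 * k)) = 0 := by
    rw [picone, show k * (π / (2 * k)) = π / 2 by field_simp, cos_pi_div_two, mul_zero, zero_div,
      zero_mul]
  linarith

lemma sq_mul_integral_sq_le_of_left_eq_zero {k : ℝ} {g g' : ℝ → ℝ} (hk : 0 < k)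
    (hg : ∀ s ∈ Icc 0 (π / (2 * k)), HasDerivAt g (g' s) s)
    (hg' : ContinuousOn g' (Icc 0 (π / (2 * k)))) (h0 : g 0 = 0) :
    k ^ 2 * ∫ s in (0 : ℝ)..(π / (2 * k)), g s ^ 2 ≤ ∫ s in (0 : ℝ)..(π / (2 * k)), g' s ^ 2 := by
  have hL : 0 < π / (2 * k) := by positivity
  have hcg : ContinuousOn g (Icc 0 (π / (2 * k))) := HasDerivAt.continuousOn hg
  have hf : ContinuousOn (fun s => g' s ^ 2 - k ^ 2 * g s ^ 2) (Icc 0 (π / (2 * k))) :=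
    (hg'.pow 2).sub (continuousOn_const.mul (hcg.pow 2))
  have hlim : Tendsto (fun δ => ∫ s in δ..(π / (2 * k)), (g' s ^ 2 - k ^ 2 * g s ^ 2)) (𝓝[>] 0)
      (𝓝 (∫ s in (0 : ℝ)..(π / (2 * k)), (g' s ^ 2 - k ^ 2 * g s ^ 2))) := by
    have hcont := intervalIntegral.continuousOn_primitive_interval_left (μ := volume)
      (by rw [uIcc_of_le hL.le]; exact hf.integrableOn_Icc)
    rw [uIcc_of_le hL.le] at hcont
    rw [← nhdsWithin_Ioo_eq_nhdsGT hL]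
    exact (hcont 0 (left_mem_Icc.mpr hL.le)).mono Ioo_subset_Icc_self
  have hnonneg : 0 ≤ ∫ s in (0 : ℝ)..(π / (2 * k)), (g' s ^ 2 - k ^ 2 * g s ^ 2) := by
    have hP := (tendsto_picone_nhdsGT_zero hk.ne' (hg 0 (left_mem_Icc.mpr hL.le)) h0).neg
    rw [neg_zero] at hP
    refine le_of_tendsto_of_tendsto hP hlim ?_
    filter_upwards [Ioo_mem_nhdsGT hL] with δ hδ
    have hsub : Icc δ (π / (2 * k)) ⊆ Icc 0 (π / (2 * k)) := Icc_subset_Icc hδ.1.le le_rfl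
    exact neg_picone_le_integral hk hδ.1 hδ.2.le (fun s hs => hg s (hsub hs)) (hg'.mono hsub)
  rw [intervalIntegral.integral_sub (f := fun s => g' s ^ 2) (g := fun s => k ^ 2 * g s ^ 2)
    ((hg'.pow 2).intervalIntegrable_of_Icc hL.le)
    ((continuousOn_const.mul (hcg.pow 2)).intervalIntegrable_of_Icc hL.le),
    intervalIntegral.integral_const_mul] at hnonneg
  linarith

lemma sq_mul_integral_sq_le_of_right_eq_zero {k : ℝ} {g g' : ℝ → ℝ} (hk : 0 < k)
    (hg : ∀ s ∈ Icc (π / (2 * k)) (π / k), HasDerivAt g (g' s) s)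
    (hg' : ContinuousOn g' (Icc (π / (2 * k)) (π / k))) (h1 : g (π / k) = 0) :
    k ^ 2 * ∫ s in (π / (2 * k))..(π / k), g s ^ 2 ≤ ∫ s in (π / (2 * k))..(π / k), g' s ^ 2 := by
  have hhalf : π / k - π / (2 * k) = π / (2 * k) := by field_simp; ring
  have hmaps : MapsTo (fun s => π / k - s) (Icc 0 (π / (2 * k))) (Icc (π / (2 * k)) (π / k)) :=
    fun s hs => ⟨by linarith [hs.2], by linarith [hs.1]⟩
  have h := sq_mul_integral_sq_le_of_left_eq_zero hk (g := fun s => g (π / k - s))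
    (g' := fun s => -g' (π / k - s))
    (fun s hs => (hg (π / k - s) (hmaps hs)).comp_const_sub (π / k) s)
    (hg'.comp (by fun_prop) hmaps).neg (by simpa using h1)
  simp only [neg_sq] at h
  rwa [intervalIntegral.integral_comp_sub_left (fun s => g s ^ 2),
    intervalIntegral.integral_comp_sub_left (fun s => g' s ^ 2), sub_zero, hhalf] at h

lemma sq_mul_integral_sq_le_of_eq_zero {k : ℝ} {g g' : ℝ → ℝ} (hk : 0 < k)
    (hg : ∀ s ∈ Icc 0 (π / k), HasDerivAt g (g' s) s) (hg' : ContinuousOn g' (Icc 0 (π / k)))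
    (h0 : g 0 = 0) (h1 : g (π / k) = 0) :
    k ^ 2 * ∫ s in (0 : ℝ)..(π / k), g s ^ 2 ≤ ∫ s in (0 : ℝ)..(π / k), g' s ^ 2 := by
  have hmid : π / (2 * k) ∈ Icc 0 (π / k) :=
    ⟨by positivity, div_le_div_of_nonneg_left pi_pos.le hk (by linarith)⟩
  have hleft : Icc 0 (π / (2 * k)) ⊆ Icc 0 (π / k) := Icc_subset_Icc le_rfl hmid.2
  have hright : Icc (π / (2 * k)) (π / k) ⊆ Icc 0 (π / k) := Icc_subset_Icc hmid.1 le_rfl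
  have hA := sq_mul_integral_sq_le_of_left_eq_zero hk (fun s hs => hg s (hleft hs))
    (hg'.mono hleft) h0
  have hB := sq_mul_integral_sq_le_of_right_eq_zero hk (fun s hs => hg s (hright hs))
    (hg'.mono hright) h1
  have hsplit : ∀ {f : ℝ → ℝ}, ContinuousOn f (Icc 0 (π / k)) → ∫ s in (0 : ℝ)..(π / k), f s =
      (∫ s in (0 : ℝ)..(π / (2 * k)), f s) + ∫ s in (π / (2 * k))..(π / k), f s :=
    fun hf => (intervalIntegral.integral_add_adjacent_intervals
      ((hf.mono hleft).intervalIntegrable_of_Icc hmid.1)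
      ((hf.mono hright).intervalIntegrable_of_Icc hmid.2)).symm
  rw [hsplit (f := fun s => g s ^ 2) ((HasDerivAt.continuousOn hg).pow 2),
    hsplit (f := fun s => g' s ^ 2) (hg'.pow 2)]
  linarith

lemma pi_sq_mul_integral_sq_le_of_integral_eq_zero {η η' : ℝ → ℝ}
    (hη : ∀ s ∈ Icc (0 : ℝ) 1, HasDerivAt η (η' s) s) (hη' : ContinuousOn η' (Icc 0 1))
    (hmean : ∫ s in (0 : ℝ)..1, η s = 0) :
    π ^ 2 * ∫ s in (0 : ℝ)..1, η s ^ 2 ≤ ∫ s in (0 : ℝ)..1, η' s ^ 2 := by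
  have hcη : ContinuousOn η (Icc 0 1) := HasDerivAt.continuousOn hη
  obtain ⟨ζ, hζ0, hζ1, hζ⟩ := exists_hasDerivAt_primitive zero_le_one hcη
  rw [hmean] at hζ1
  have hcζ : ContinuousOn ζ (Icc 0 1) := HasDerivAt.continuousOn hζ
  have hibp : ∫ s in (0 : ℝ)..1, ζ s * η' s = -∫ s in (0 : ℝ)..1, η s ^ 2 := by
    rw [intervalIntegral.integral_mul_deriv_eq_deriv_mul (by rwa [uIcc_of_le zero_le_one])
      (by rwa [uIcc_of_le zero_le_one]) (hcη.intervalIntegrable_of_Icc zero_le_one)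
      (hη'.intervalIntegrable_of_Icc zero_le_one), hζ0, hζ1]
    simp [sq]
  have hdir : π ^ 2 * ∫ s in (0 : ℝ)..1, ζ s ^ 2 ≤ ∫ s in (0 : ℝ)..1, η s ^ 2 := by
    have h := sq_mul_integral_sq_le_of_eq_zero (k := π) (g := ζ) (g' := η) pi_pos
    rw [div_self pi_ne_zero] at h
    exact h hζ hcη hζ0 hζ1
  have hyoung : ∫ s in (0 : ℝ)..1, -(2 * π ^ 2) * (ζ s * η' s)
      ≤ ∫ s in (0 : ℝ)..1, (π ^ 4 * ζ s ^ 2 + η' s ^ 2) :=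
    intervalIntegral.integral_mono_on zero_le_one
      ((by fun_prop : ContinuousOn (fun s => -(2 * π ^ 2) * (ζ s * η' s)) (Icc 0 1))
        |>.intervalIntegrable_of_Icc zero_le_one)
      ((by fun_prop : ContinuousOn (fun s => π ^ 4 * ζ s ^ 2 + η' s ^ 2) (Icc 0 1))
        |>.intervalIntegrable_of_Icc zero_le_one)
      (fun s _ => by linear_combination two_mul_le_add_sq (-π ^ 2 * ζ s) (η' s))
  rw [intervalIntegral.integral_const_mul, hibp, intervalIntegral.integral_add
    (f := fun s => π ^ 4 * ζ s ^ 2) (g := fun s => η' s ^ 2)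
    ((hcζ.pow 2).const_mul _ |>.intervalIntegrable_of_Icc zero_le_one)
    ((hη'.pow 2).intervalIntegrable_of_Icc zero_le_one),
    intervalIntegral.integral_const_mul] at hyoung
  linarith [mul_le_mul_of_nonneg_left hdir (sq_nonneg π)]

theorem second_variation_nonneg_trivial_general
    (ε lam c : ℝ) (hε : 0 < ε)
    (hstab : 0 < ε * Real.pi^2 + lam^2 * c) :
    ∀ η η' : ℝ → ℝ,
      (∀ s ∈ Set.Icc (0:ℝ) 1, HasDerivAt η (η' s) s) →
      ContinuousOn η' (Set.Icc 0 1) →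
      (∫ s in (0:ℝ)..1, η s) = 0 →
      (ε * Real.pi^2 + lam^2 * c) * (∫ s in (0:ℝ)..1, (η s)^2)
          ≤ (∫ s in (0:ℝ)..1, (ε * (η' s)^2 + lam^2 * c * (η s)^2)) ∧
      0 ≤ ∫ s in (0:ℝ)..1, (ε * (η' s)^2 + lam^2 * c * (η s)^2) := by
  intro η η' hη hη' hmean
  have hcη : ContinuousOn η (Icc 0 1) := HasDerivAt.continuousOn hη
  have hpoincare := pi_sq_mul_integral_sq_le_of_integral_eq_zero hη hη' hmean
  have hsq_nonneg : 0 ≤ ∫ s in (0 : ℝ)..1, η s ^ 2 :=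
    intervalIntegral.integral_nonneg zero_le_one fun s _ => sq_nonneg _
  have hbound : (ε * π ^ 2 + lam ^ 2 * c) * ∫ s in (0 : ℝ)..1, η s ^ 2
      ≤ ∫ s in (0 : ℝ)..1, (ε * η' s ^ 2 + lam ^ 2 * c * η s ^ 2) := by
    rw [intervalIntegral.integral_add (f := fun s => ε * η' s ^ 2)
      (g := fun s => lam ^ 2 * c * η s ^ 2)
      ((hη'.pow 2).const_mul _ |>.intervalIntegrable_of_Icc zero_le_one)
      ((hcη.pow 2).const_mul _ |>.intervalIntegrable_of_Icc zero_le_one),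
      intervalIntegral.integral_const_mul, intervalIntegral.integral_const_mul]
    linarith [mul_le_mul_of_nonneg_left hpoincare hε.le]
  exact ⟨hbound, (mul_nonneg hstab.le hsq_nonneg).trans hbound⟩

/-- Second variation at the trivial solution for `λ < λ₁` (encoded by
`επ² + λ²Ẅ*(1/λ) > 0`, with `c := Ẅ*(1/λ)`): for every zero-mean C¹ variation `η`,
`δ²V ≥ (επ² + λ²c)∫η² ≥ 0`, via the sharp Poincaré inequality. -/
theorem second_variation_nonneg_trivial
    (ε lam c : ℝ) (hε : 0 < ε) (hlam : 0 < lam)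
    (hstab : 0 < ε * Real.pi^2 + lam^2 * c) :
    ∀ η η' : ℝ → ℝ,
      (∀ s ∈ Set.Icc (0:ℝ) 1, HasDerivAt η (η' s) s) →
      ContinuousOn η' (Set.Icc 0 1) →
      (∫ s in (0:ℝ)..1, η s) = 0 →
      (ε * Real.pi^2 + lam^2 * c) * (∫ s in (0:ℝ)..1, (η s)^2)
          ≤ (∫ s in (0:ℝ)..1, (ε * (η' s)^2 + lam^2 * c * (η s)^2)) ∧
      0 ≤ ∫ s in (0:ℝ)..1, (ε * (η' s)^2 + lam^2 * c * (η s)^2) :=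
  second_variation_nonneg_trivial_general ε lam c hε hstab
end

section
/- For λ > λ_k, the test functions η_ℓ(s) = cos(ℓπs), ℓ = 1,…,k, which have zero mean, satisfy δ²V_ε[λ,0;η_ℓ] = [ε ℓ²π² + λ² Ẅ*(1/λ)]/2, and this quantity is negative whenever ε ℓ²π²/λ² < -Ẅ*(1/λ); hence the trivial solution is unstable for λ > λ₁. -/
/-!
Since `(cos (ℓπs))' = -ℓπ sin (ℓπs)` and both `cos²` and `sin²` of `ℓπs` average to `1/2`
over `[0,1]`, the second variation at `η_ℓ` is `(εℓ²π² + λ²Ẅ*(1/λ))/2`; multiplying the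
condition `εℓ²π²/λ² < -Ẅ*(1/λ)` by `λ² > 0` makes it negative.
-/

open Real intervalIntegral MeasureTheory

/-- `δ²V_ε[λ,0;η]`, with `μ = λ² Ẅ*(1/λ)` and the derivative `η'` given separately. -/
noncomputable def secondVariation (ε μ : ℝ) (η η' : ℝ → ℝ) : ℝ :=
  ∫ s in (0:ℝ)..1, (ε * η' s ^ 2 + μ * η s ^ 2)

lemma integral_cos_nat_mul_pi {ℓ : ℕ} (hℓ : ℓ ≠ 0) :
    ∫ s in (0:ℝ)..1, cos (ℓ * π * s) = 0 := by
  have hk : (ℓ : ℝ) * π ≠ 0 := by positivity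
  simp [integral_comp_mul_left (fun x => cos x) hk, sin_nat_mul_pi]

lemma integral_cos_sq_nat_mul_pi {ℓ : ℕ} (hℓ : ℓ ≠ 0) :
    ∫ s in (0:ℝ)..1, cos (ℓ * π * s) ^ 2 = 1 / 2 := by
  have hk : (ℓ : ℝ) * π ≠ 0 := by positivity
  rw [integral_comp_mul_left (fun x => cos x ^ 2) hk, integral_cos_sq]
  simp only [mul_one, mul_zero, sin_zero, sin_nat_mul_pi, smul_eq_mul]
  field_simp
  ring

lemma integral_sin_sq_nat_mul_pi {ℓ : ℕ} (hℓ : ℓ ≠ 0) :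
    ∫ s in (0:ℝ)..1, sin (ℓ * π * s) ^ 2 = 1 / 2 := by
  have hk : (ℓ : ℝ) * π ≠ 0 := by positivity
  rw [integral_comp_mul_left (fun x => sin x ^ 2) hk, integral_sin_sq]
  simp only [mul_one, mul_zero, sin_zero, sin_nat_mul_pi, smul_eq_mul]
  field_simp
  ring

lemma deriv_cos_const_mul (k s : ℝ) :
    deriv (fun t => cos (k * t)) s = -(k * sin (k * s)) := by
  simpa [mul_comm] using (((hasDerivAt_id s).const_mul k).cos).deriv

lemma secondVariation_cos_nat_mul_pi (ε μ : ℝ) {ℓ : ℕ} (hℓ : ℓ ≠ 0) :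
    secondVariation ε μ (fun s => cos (ℓ * π * s)) (deriv fun t => cos (ℓ * π * t))
      = (ε * ℓ ^ 2 * π ^ 2 + μ) / 2 := by
  have hintegrand : ∀ s : ℝ,
      ε * deriv (fun t => cos (ℓ * π * t)) s ^ 2 + μ * cos (ℓ * π * s) ^ 2
        = (ε * ℓ ^ 2 * π ^ 2) * sin (ℓ * π * s) ^ 2 + μ * cos (ℓ * π * s) ^ 2 := by
    intro s
    rw [deriv_cos_const_mul]
    ring
  have hint : ∀ f : ℝ → ℝ, Continuous f → IntervalIntegrable f volume 0 1 :=
    fun f hf => hf.intervalIntegrable 0 1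
  rw [secondVariation, integral_congr fun s _ => hintegrand s,
    integral_add (hint _ (by fun_prop)) (hint _ (by fun_prop)),
    intervalIntegral.integral_const_mul, intervalIntegral.integral_const_mul,
    integral_sin_sq_nat_mul_pi hℓ, integral_cos_sq_nat_mul_pi hℓ]
  ring

lemma add_sq_mul_neg_of_div_sq_lt_neg {a lam c : ℝ} (hlam : lam ≠ 0) (h : a / lam ^ 2 < -c) :
    a + lam ^ 2 * c < 0 := by
  have := (div_lt_iff₀ (by positivity : (0:ℝ) < lam ^ 2)).mp h
  linarith

theorem second_variation_negative_cosine_general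
    (ε lam c : ℝ) (hlam : 0 < lam) :
    (∀ ℓ : ℕ, 1 ≤ ℓ →
      (∫ s in (0:ℝ)..1, Real.cos (ℓ * Real.pi * s)) = 0 ∧
      (∫ s in (0:ℝ)..1,
          (ε * (deriv (fun t : ℝ => Real.cos (ℓ * Real.pi * t)) s)^2
            + lam^2 * c * (Real.cos (ℓ * Real.pi * s))^2))
        = (ε * ℓ^2 * Real.pi^2 + lam^2 * c) / 2 ∧
      (ε * ℓ^2 * Real.pi^2 / lam^2 < -c →
        (∫ s in (0:ℝ)..1,
          (ε * (deriv (fun t : ℝ => Real.cos (ℓ * Real.pi * t)) s)^2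
            + lam^2 * c * (Real.cos (ℓ * Real.pi * s))^2)) < 0)) ∧
    (ε * Real.pi^2 / lam^2 < -c →
      ∃ η η' : ℝ → ℝ,
        (∀ s ∈ Set.Icc (0:ℝ) 1, HasDerivAt η (η' s) s) ∧
        (∫ s in (0:ℝ)..1, η s) = 0 ∧
        (∫ s in (0:ℝ)..1,
          (ε * (η' s)^2 + lam^2 * c * (η s)^2)) < 0) := by
  have hcos : ∀ ℓ : ℕ, 1 ≤ ℓ →
      (∫ s in (0:ℝ)..1, cos (ℓ * π * s)) = 0 ∧
      secondVariation ε (lam ^ 2 * c) (fun s => cos (ℓ * π * s))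
          (deriv fun t => cos (ℓ * π * t)) = (ε * ℓ ^ 2 * π ^ 2 + lam ^ 2 * c) / 2 ∧
      (ε * ℓ ^ 2 * π ^ 2 / lam ^ 2 < -c →
        secondVariation ε (lam ^ 2 * c) (fun s => cos (ℓ * π * s))
          (deriv fun t => cos (ℓ * π * t)) < 0) := by
    intro ℓ hℓ
    have hℓ0 : ℓ ≠ 0 := Nat.one_le_iff_ne_zero.mp hℓ
    refine ⟨integral_cos_nat_mul_pi hℓ0, secondVariation_cos_nat_mul_pi ε _ hℓ0, fun h => ?_⟩
    rw [secondVariation_cos_nat_mul_pi ε _ hℓ0]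
    linarith [add_sq_mul_neg_of_div_sq_lt_neg hlam.ne' h]
  refine ⟨hcos, fun h => ?_⟩
  obtain ⟨hmean, -, hneg⟩ := hcos 1 le_rfl
  refine ⟨fun s => cos ((1 : ℕ) * π * s), deriv fun t => cos ((1 : ℕ) * π * t),
    fun s _ => ?_, hmean, hneg (by simpa using h)⟩
  exact (by fun_prop : Differentiable ℝ fun t => cos ((1 : ℕ) * π * t)) s |>.hasDerivAt

/-- For the zero-mean test functions `η_ℓ(s) = cos(ℓπs)` the second
variation at the trivial solution equals `(εℓ²π² + λ²c)/2` (with `c := Ẅ*(1/λ)`), which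
is negative when `εℓ²π²/λ² < -c`; hence the trivial solution is unstable for `λ > λ₁`. -/
theorem second_variation_negative_cosine
    (ε lam c : ℝ) (hε : 0 < ε) (hlam : 0 < lam) :
    (∀ ℓ : ℕ, 1 ≤ ℓ →
      (∫ s in (0:ℝ)..1, Real.cos (ℓ * Real.pi * s)) = 0 ∧
      (∫ s in (0:ℝ)..1,
          (ε * (deriv (fun t : ℝ => Real.cos (ℓ * Real.pi * t)) s)^2
            + lam^2 * c * (Real.cos (ℓ * Real.pi * s))^2))
        = (ε * ℓ^2 * Real.pi^2 + lam^2 * c) / 2 ∧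
      (ε * ℓ^2 * Real.pi^2 / lam^2 < -c →
        (∫ s in (0:ℝ)..1,
          (ε * (deriv (fun t : ℝ => Real.cos (ℓ * Real.pi * t)) s)^2
            + lam^2 * c * (Real.cos (ℓ * Real.pi * s))^2)) < 0)) ∧
    (ε * Real.pi^2 / lam^2 < -c →
      ∃ η η' : ℝ → ℝ,
        (∀ s ∈ Set.Icc (0:ℝ) 1, HasDerivAt η (η' s) s) ∧
        (∫ s in (0:ℝ)..1, η s) = 0 ∧
        (∫ s in (0:ℝ)..1,
          (ε * (η' s)^2 + lam^2 * c * (η s)^2)) < 0) :=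
  second_variation_negative_cosine_general ε lam c hlam
end
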